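/- Let Σ be a real symmetric positive definite 2n×2n matrix. Then the complex Hermitian matrix Σ + (iℏ/2)J (obtained by regarding Σ and J as complex matrices) is positive semidefinite if and only if the ellipsoid Ω := {z ∈ ℝ^{2n} : Σ⁻¹z·z ≤ 2} contains a quantum blob, i.e. iff there exists S ∈ Sp(n) with S(B^{2n}(√ℏ)) ⊆ Ω. -/

import Mathlib

/-
Write `R = √Σ` and `A = R⁻¹ J R⁻¹`. For `x = u + iv` the Hermitian form of `Σ + (iℏ/2)J` is
`u·Σu + v·Σv - ℏ u·Jv`, so the quantum condition says that the antisymmetric matrix `A` has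
operator norm at most `2/ℏ`, i.e. `(ℏ/2)|A| ≤ 1` for `|A| = √(AᵀA)`. Since `A` is normal, `|A|`
commutes with `A`, and `G = R|A|R` is then a positive symplectic matrix with `(ℏ/2)G ≤ Σ`. Its
square root `S` is symplectic too, because conjugation by the orthogonal matrix `J` sends `√G` to
`√(G⁻¹) = (√G)⁻¹`. Finally `S(B(√ℏ)) ⊆ Ω` says `SᵀΣ⁻¹S ≤ 2/ℏ`, which is equivalent to
`(ℏ/2)SSᵀ ≤ Σ`; conversely, this inequality for a symplectic `S` gives
`ℏ u·Jv = ℏ (Sᵀu)·J(Sᵀv) ≤ (ℏ/2)(|Sᵀu|² + |Sᵀv|²) ≤ u·Σu + v·Σv`.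
-/

open Matrix Set ComplexOrder

noncomputable section

/-- The standard symplectic matrix `J = [[0, I],[-I, 0]]` on `ℝ²ⁿ = ℝⁿ ⊕ ℝⁿ`. -/
def J (n : ℕ) : Matrix (Fin n ⊕ Fin n) (Fin n ⊕ Fin n) ℝ :=
  Matrix.fromBlocks 0 1 (-1) 0

/-- `S ∈ Sp(n)` iff `Sᵀ J S = J`. -/
def IsSymplectic {n : ℕ} (S : Matrix (Fin n ⊕ Fin n) (Fin n ⊕ Fin n) ℝ) : Prop :=
  Sᵀ * J n * S = J n

/-- The closed ball `B²ⁿ(√ℏ) = {z : z·z ≤ ℏ}` of radius `√ℏ` centered at `0`. -/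
def ballh (n : ℕ) (ℏ : ℝ) : Set (Fin n ⊕ Fin n → ℝ) :=
  {z | z ⬝ᵥ z ≤ ℏ}

open scoped MatrixOrder

theorem Matrix.IsHermitian.transpose_eq_self {ι : Type*} {A : Matrix ι ι ℝ} (hA : A.IsHermitian) :
    Aᵀ = A :=
  (isHermitian_iff_isSymm.mp hA).eq

section RealForms

variable {ι : Type*} [Fintype ι]

theorem Matrix.dotProduct_mul_mulVec {α κ μ : Type*} [CommSemiring α] [Fintype κ] [Fintype μ]
    (x : κ → α) (B : Matrix κ ι α) (C : Matrix ι μ α) (y : μ → α) :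
    x ⬝ᵥ (B * C) *ᵥ y = Bᵀ *ᵥ x ⬝ᵥ C *ᵥ y := by
  rw [← mulVec_mulVec, dotProduct_mulVec, mulVec_transpose]

theorem Matrix.mulVec_dotProduct_mulVec_self {α : Type*} [CommSemiring α] (B : Matrix ι ι α)
    (y : ι → α) : B *ᵥ y ⬝ᵥ B *ᵥ y = y ⬝ᵥ (Bᵀ * B) *ᵥ y := by
  rw [dotProduct_mul_mulVec, transpose_transpose]

theorem Matrix.PosSemidef.two_mul_mul_dotProduct_mulVec_le {P : Matrix ι ι ℝ}
    (hP : P.PosSemidef) (t : ℝ) (x y : ι → ℝ) :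
    2 * t * (x ⬝ᵥ P *ᵥ y) ≤ t ^ 2 * (x ⬝ᵥ P *ᵥ x) + y ⬝ᵥ P *ᵥ y := by
  have hyx : y ⬝ᵥ P *ᵥ x = x ⬝ᵥ P *ᵥ y := by
    rw [← dotProduct_transpose_mulVec, hP.1.transpose_eq_self]
  have h := hP.dotProduct_mulVec_nonneg (t • x - y)
  simp only [star_trivial, mulVec_sub, mulVec_smul, dotProduct_sub, sub_dotProduct,
    dotProduct_smul, smul_dotProduct, smul_eq_mul, hyx] at h
  linarith

theorem two_mul_mul_dotProduct_le (t : ℝ) (x y : ι → ℝ) :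
    2 * t * (x ⬝ᵥ y) ≤ t ^ 2 * (x ⬝ᵥ x) + y ⬝ᵥ y := by
  classical
  simpa using PosSemidef.one.two_mul_mul_dotProduct_mulVec_le t x y

theorem forall_dotProduct_mulVec_le_of_dotProduct_self_le_iff {M : Matrix ι ι ℝ} {r s : ℝ}
    (hr : 0 < r) (hs : 0 < s) :
    (∀ z, z ⬝ᵥ z ≤ r → z ⬝ᵥ M *ᵥ z ≤ s) ↔ ∀ z, r / s * (z ⬝ᵥ M *ᵥ z) ≤ z ⬝ᵥ z := by
  constructor
  · intro h z
    rcases eq_or_ne z 0 with rfl | hz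
    · simp
    have hzz : 0 < z ⬝ᵥ z := by simpa using dotProduct_star_self_pos_iff.mpr hz
    have ht : √(r / (z ⬝ᵥ z)) ^ 2 = r / (z ⬝ᵥ z) := Real.sq_sqrt (div_pos hr hzz).le
    have h' := h (√(r / (z ⬝ᵥ z)) • z) (by
      rw [smul_dotProduct, dotProduct_smul, smul_eq_mul, smul_eq_mul, ← mul_assoc, ← sq, ht,
        div_mul_cancel₀ _ hzz.ne'])
    rw [mulVec_smul, smul_dotProduct, dotProduct_smul, smul_eq_mul, smul_eq_mul, ← mul_assoc,
      ← sq, ht, div_mul_eq_mul_div, div_le_iff₀ hzz] at h'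
    rw [div_mul_eq_mul_div, div_le_iff₀ hs]
    linarith
  · intro h z hz
    have := (h z).trans hz
    rwa [div_mul_eq_mul_div, div_le_iff₀ hs, mul_le_mul_iff_of_pos_left hr] at this

variable [DecidableEq ι]

theorem Matrix.PosDef.forall_dotProduct_transpose_mul_inv_mul_le_iff {Sig : Matrix ι ι ℝ}
    (hSig : Sig.PosDef) (S : Matrix ι ι ℝ) {d : ℝ} (hd : 0 ≤ d) :
    (∀ z, d * (z ⬝ᵥ (Sᵀ * Sig⁻¹ * S) *ᵥ z) ≤ z ⬝ᵥ z) ↔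
      ∀ v, d * (v ⬝ᵥ (S * Sᵀ) *ᵥ v) ≤ v ⬝ᵥ Sig *ᵥ v := by
  have hsymm : Sigᵀ = Sig := hSig.1.transpose_eq_self
  have hinv (w : ι → ℝ) : Sig *ᵥ Sig⁻¹ *ᵥ w = w := by
    rw [mulVec_mulVec, mul_nonsing_inv _ ((isUnit_iff_isUnit_det _).mp hSig.isUnit), one_mulVec]
  have hform (z : ι → ℝ) : z ⬝ᵥ (Sᵀ * Sig⁻¹ * S) *ᵥ z = Sig⁻¹ *ᵥ S *ᵥ z ⬝ᵥ S *ᵥ z := by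
    rw [Matrix.mul_assoc, dotProduct_mul_mulVec, transpose_transpose, ← mulVec_mulVec,
      dotProduct_comm]
  simp only [hform, dotProduct_mul_mulVec]
  -- Both directions are AM-GM, paired through `p = Sig⁻¹ *ᵥ S *ᵥ z`, for which `Sig *ᵥ p = S *ᵥ z`.
  constructor
  · intro h v
    have hAM := hSig.posSemidef.two_mul_mul_dotProduct_mulVec_le d (Sig⁻¹ *ᵥ S *ᵥ Sᵀ *ᵥ v) v
    have hz : Sig⁻¹ *ᵥ S *ᵥ Sᵀ *ᵥ v ⬝ᵥ Sig *ᵥ v = Sᵀ *ᵥ v ⬝ᵥ Sᵀ *ᵥ v := by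
      rw [← dotProduct_transpose_mulVec, hsymm, hinv, dotProduct_transpose_mulVec]
    rw [hz, hinv] at hAM
    linarith [mul_le_mul_of_nonneg_left (h (Sᵀ *ᵥ v)) hd]
  · intro h z
    have hAM := two_mul_mul_dotProduct_le d (Sᵀ *ᵥ Sig⁻¹ *ᵥ S *ᵥ z) z
    have hp := h (Sig⁻¹ *ᵥ S *ᵥ z)
    rw [dotProduct_comm, dotProduct_transpose_mulVec] at hAM
    rw [hinv] at hp
    linarith [mul_le_mul_of_nonneg_left hp hd]

theorem Matrix.cfcAbs_mul_inv_mul_cfcAbs_of_transpose_eq_neg {A : Matrix ι ι ℝ} (hA : Aᵀ = -A)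
    (hdet : IsUnit A.det) : CFC.abs A * A⁻¹ * CFC.abs A = -A := by
  have hstar : star A = -A := by
    rw [star_eq_conjTranspose, conjTranspose_eq_transpose_of_trivial, hA]
  have hnormal : IsStarNormal A := ⟨by rw [hstar]; exact (Commute.refl A).neg_left⟩
  have hcomm : CFC.abs A * A = A * CFC.abs A := CFC.commute_abs_self A
  have hcomm_inv : CFC.abs A * A⁻¹ = A⁻¹ * CFC.abs A :=
    calc CFC.abs A * A⁻¹ = A⁻¹ * (A * CFC.abs A) * A⁻¹ := by
          rw [← mul_assoc, nonsing_inv_mul _ hdet, one_mul]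
      _ = A⁻¹ * CFC.abs A := by
          rw [← hcomm, mul_assoc, mul_assoc, mul_nonsing_inv _ hdet, mul_one]
  rw [hcomm_inv, mul_assoc, CFC.abs_mul_abs, hstar, neg_mul, mul_neg, ← mul_assoc,
    nonsing_inv_mul _ hdet, one_mul]

theorem Matrix.mul_dotProduct_cfcAbs_mulVec_le {A : Matrix ι ι ℝ} {d : ℝ}
    (h : ∀ a b, 2 * d * (a ⬝ᵥ A *ᵥ b) ≤ a ⬝ᵥ a + b ⬝ᵥ b) (y : ι → ℝ) :
    d * (y ⬝ᵥ CFC.abs A *ᵥ y) ≤ y ⬝ᵥ y := by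
  have hA (b : ι → ℝ) : d ^ 2 * (A *ᵥ b ⬝ᵥ A *ᵥ b) ≤ b ⬝ᵥ b := by
    have := h (d • A *ᵥ b) b
    simp only [smul_dotProduct, dotProduct_smul, smul_eq_mul] at this
    linarith
  have habs : CFC.abs A *ᵥ y ⬝ᵥ CFC.abs A *ᵥ y = A *ᵥ y ⬝ᵥ A *ᵥ y := by
    have hsymm : (CFC.abs A)ᵀ = CFC.abs A :=
      (CFC.abs_nonneg A).posSemidef.1.transpose_eq_self
    rw [mulVec_dotProduct_mulVec_self, mulVec_dotProduct_mulVec_self, hsymm, CFC.abs_mul_abs,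
      star_eq_conjTranspose, conjTranspose_eq_transpose_of_trivial]
  have := two_mul_mul_dotProduct_le d (CFC.abs A *ᵥ y) y
  rw [habs, dotProduct_comm] at this
  linarith [hA y]

end RealForms

section ComplexForms

variable {ι : Type*} [Fintype ι]

open Complex

theorem Matrix.star_dotProduct_map_ofReal_mulVec (B : Matrix ι ι ℝ) (x : ι → ℂ) :
    star x ⬝ᵥ B.map (Complex.ofReal ·) *ᵥ x =
      ((re ∘ x) ⬝ᵥ B *ᵥ (re ∘ x) + (im ∘ x) ⬝ᵥ B *ᵥ (im ∘ x) : ℝ) +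
        I * ((re ∘ x) ⬝ᵥ B *ᵥ (im ∘ x) - (im ∘ x) ⬝ᵥ B *ᵥ (re ∘ x) : ℝ) := by
  simp only [dotProduct, mulVec, Matrix.map_apply, Pi.star_apply, Function.comp_apply,
    Finset.mul_sum]
  apply Complex.ext
  · simp [Complex.mul_re, Finset.sum_add_distrib]
  · simp [Complex.mul_im, Finset.sum_add_distrib, sub_eq_add_neg]

theorem Matrix.posSemidef_map_ofReal_add_I_mul_smul_iff {A K : Matrix ι ι ℝ}
    (hA : A.IsHermitian) (hK : Kᵀ = -K) (r : ℝ) :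
    (A.map (Complex.ofReal ·) + (I * r) • K.map (Complex.ofReal ·)).PosSemidef ↔
      ∀ u v : ι → ℝ, 2 * r * (u ⬝ᵥ K *ᵥ v) ≤ u ⬝ᵥ A *ᵥ u + v ⬝ᵥ A *ᵥ v := by
  have hA_comm (u v : ι → ℝ) : v ⬝ᵥ A *ᵥ u = u ⬝ᵥ A *ᵥ v := by
    rw [← dotProduct_transpose_mulVec, hA.transpose_eq_self]
  have hK_anti (u v : ι → ℝ) : v ⬝ᵥ K *ᵥ u = -(u ⬝ᵥ K *ᵥ v) := by
    rw [← dotProduct_transpose_mulVec, hK, neg_mulVec, dotProduct_neg]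
  have hK_self (u : ι → ℝ) : u ⬝ᵥ K *ᵥ u = 0 := by linarith [hK_anti u u]
  have hform (x : ι → ℂ) :
      star x ⬝ᵥ (A.map (Complex.ofReal ·) + (I * r) • K.map (Complex.ofReal ·)) *ᵥ x =
        ((re ∘ x) ⬝ᵥ A *ᵥ (re ∘ x) + (im ∘ x) ⬝ᵥ A *ᵥ (im ∘ x) -
          2 * r * ((re ∘ x) ⬝ᵥ K *ᵥ (im ∘ x)) : ℝ) := by
    rw [add_mulVec, dotProduct_add, smul_mulVec, dotProduct_smul, smul_eq_mul,
      star_dotProduct_map_ofReal_mulVec, star_dotProduct_map_ofReal_mulVec,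
      hA_comm (re ∘ x) (im ∘ x), hK_anti (re ∘ x) (im ∘ x), hK_self, hK_self]
    push_cast
    ring_nf
    rw [I_sq]
    ring
  have hherm : (A.map (Complex.ofReal ·) + (I * r) • K.map (Complex.ofReal ·)).IsHermitian := by
    ext i j
    have hKji : K j i = -K i j := congrFun (congrFun hK i) j
    simp [← hA.apply i j, hKji]
  rw [posSemidef_iff_dotProduct_mulVec]
  simp only [hherm, hform, zero_le_real, sub_nonneg, true_and]
  refine ⟨fun h u v => ?_, fun h x => h _ _⟩
  exact h (fun i => ⟨u i, v i⟩)

end ComplexForms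

theorem J.eq_neg_symplecticJ (n : ℕ) : J n = -Matrix.J (Fin n) ℝ := by
  simp [_root_.J, Matrix.J, fromBlocks_neg]

theorem J.transpose_eq_neg (n : ℕ) : (J n)ᵀ = -J n := by
  rw [J.eq_neg_symplecticJ, transpose_neg, Matrix.J_transpose]

theorem J.transpose_mul_self (n : ℕ) : (J n)ᵀ * J n = 1 := by
  rw [J.transpose_eq_neg, J.eq_neg_symplecticJ, neg_neg, mul_neg, Matrix.J_squared, neg_neg]

theorem J.mul_self (n : ℕ) : J n * J n = -1 := by
  rw [J.eq_neg_symplecticJ, neg_mul_neg, Matrix.J_squared]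

section Symplectic

variable {n : ℕ}

theorem isSymplectic_iff_mem_symplecticGroup {S : Matrix (Fin n ⊕ Fin n) (Fin n ⊕ Fin n) ℝ} :
    IsSymplectic S ↔ S ∈ symplecticGroup (Fin n) ℝ := by
  rw [IsSymplectic, SymplecticGroup.mem_iff', J.eq_neg_symplecticJ, mul_neg, neg_mul, neg_inj]

namespace IsSymplectic

variable {S : Matrix (Fin n ⊕ Fin n) (Fin n ⊕ Fin n) ℝ}

theorem mul_J_mul_transpose (hS : IsSymplectic S) : S * J n * Sᵀ = J n := by
  have := SymplecticGroup.transpose_mem (isSymplectic_iff_mem_symplecticGroup.mp hS)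
  rwa [← transpose_transpose S, ← isSymplectic_iff_mem_symplecticGroup, IsSymplectic,
    transpose_transpose] at this

theorem isUnit_det (hS : IsSymplectic S) : IsUnit S.det :=
  SymplecticGroup.symplectic_det (isSymplectic_iff_mem_symplecticGroup.mp hS)

theorem inv_eq (hS : IsSymplectic S) : S⁻¹ = J n * Sᵀ * (J n)ᵀ := by
  rw [SymplecticGroup.inv_eq_symplectic_inv S (isSymplectic_iff_mem_symplecticGroup.mp hS),
    J.transpose_eq_neg, J.eq_neg_symplecticJ]
  simp only [neg_neg, neg_mul]

theorem sqrt {G : Matrix (Fin n ⊕ Fin n) (Fin n ⊕ Fin n) ℝ} (hG : G.PosSemidef)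
    (hGs : IsSymplectic G) : IsSymplectic (CFC.sqrt G) := by
  set S := CFC.sqrt G
  have hS : S.PosSemidef := (CFC.sqrt_nonneg G).posSemidef
  have hSS : S * S = G := CFC.sqrt_mul_sqrt_self G hG.nonneg
  have hS_symm : Sᵀ = S := hS.1.transpose_eq_self
  have hS_det : IsUnit S.det := by
    have := hGs.isUnit_det
    rw [← hSS, det_mul] at this
    exact isUnit_of_mul_isUnit_left this
  have hS_inv : S⁻¹ = J n * S * (J n)ᵀ := by
    rw [hG.inv_sqrt, hGs.inv_eq, hG.1.transpose_eq_self]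
    refine CFC.sqrt_unique ?_ ?_
    · rw [← hSS]
      simp only [mul_assoc]
      rw [← mul_assoc (J n)ᵀ, J.transpose_mul_self, one_mul]
    · simpa [nonneg_iff_posSemidef] using hS.mul_mul_conjTranspose_same (J n)
  unfold IsSymplectic
  calc Sᵀ * J n * S = S * (J n * S * (J n)ᵀ) * J n := by
        simp only [hS_symm, mul_assoc, J.transpose_mul_self, mul_one]
    _ = J n := by rw [← hS_inv, mul_nonsing_inv _ hS_det, one_mul]

theorem two_mul_mul_dotProduct_J_mulVec_le {Sig : Matrix (Fin n ⊕ Fin n) (Fin n ⊕ Fin n) ℝ}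
    (hS : IsSymplectic S) {d : ℝ} (hd : 0 ≤ d)
    (h : ∀ v, d * (v ⬝ᵥ (S * Sᵀ) *ᵥ v) ≤ v ⬝ᵥ Sig *ᵥ v) (u v : Fin n ⊕ Fin n → ℝ) :
    2 * d * (u ⬝ᵥ J n *ᵥ v) ≤ u ⬝ᵥ Sig *ᵥ u + v ⬝ᵥ Sig *ᵥ v := by
  have hJ : u ⬝ᵥ J n *ᵥ v = Sᵀ *ᵥ u ⬝ᵥ J n *ᵥ Sᵀ *ᵥ v := by
    conv_lhs => rw [← hS.mul_J_mul_transpose, mul_assoc, dotProduct_mul_mulVec, ← mulVec_mulVec]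
  have hJ_isom : J n *ᵥ Sᵀ *ᵥ v ⬝ᵥ J n *ᵥ Sᵀ *ᵥ v = Sᵀ *ᵥ v ⬝ᵥ Sᵀ *ᵥ v := by
    rw [mulVec_dotProduct_mulVec_self, J.transpose_mul_self, one_mulVec]
  simp only [dotProduct_mul_mulVec] at h
  have hAM := two_mul_mul_dotProduct_le 1 (Sᵀ *ᵥ u) (J n *ᵥ Sᵀ *ᵥ v)
  rw [hJ_isom, one_pow, one_mul, mul_one] at hAM
  rw [hJ]
  linarith [mul_le_mul_of_nonneg_left hAM hd, h u, h v]

end IsSymplectic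

theorem isSymplectic_mul_cfcAbs_mul {R : Matrix (Fin n ⊕ Fin n) (Fin n ⊕ Fin n) ℝ} (hR : Rᵀ = R)
    (hdet : IsUnit R.det) : IsSymplectic (R * CFC.abs (R⁻¹ * J n * R⁻¹) * R) := by
  set A := R⁻¹ * J n * R⁻¹
  have hRinv : (R⁻¹)ᵀ = R⁻¹ := by rw [transpose_nonsing_inv, hR]
  have hA : Aᵀ = -A := by simp [A, transpose_mul, hRinv, J.transpose_eq_neg, mul_assoc]
  have hleft : -(R * J n * R) * A = 1 := by
    simp only [A, neg_mul, mul_assoc]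
    rw [mul_nonsing_inv_cancel_left _ _ hdet, ← mul_assoc (J n), J.mul_self, neg_one_mul, mul_neg,
      mul_nonsing_inv _ hdet, neg_neg]
  have hRJR : R * J n * R = -A⁻¹ := by rw [inv_eq_left_inv hleft, neg_neg]
  have habs : (CFC.abs A)ᵀ = CFC.abs A :=
    (CFC.abs_nonneg A).posSemidef.1.transpose_eq_self
  unfold IsSymplectic
  calc (R * CFC.abs A * R)ᵀ * J n * (R * CFC.abs A * R)
      = R * (CFC.abs A * (R * J n * R) * CFC.abs A) * R := by
        simp only [transpose_mul, hR, habs, mul_assoc]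
    _ = R * A * R := by
        rw [hRJR, mul_neg, neg_mul,
          cfcAbs_mul_inv_mul_cfcAbs_of_transpose_eq_neg hA (isUnit_det_of_left_inverse hleft),
          neg_neg]
    _ = J n := by
        simp only [A, mul_assoc, nonsing_inv_mul _ hdet, mul_one]
        rw [mul_nonsing_inv_cancel_left _ _ hdet]

theorem exists_posSemidef_isSymplectic_le {Sig : Matrix (Fin n ⊕ Fin n) (Fin n ⊕ Fin n) ℝ}
    (hSig : Sig.PosDef) {d : ℝ}
    (hq : ∀ u v, 2 * d * (u ⬝ᵥ J n *ᵥ v) ≤ u ⬝ᵥ Sig *ᵥ u + v ⬝ᵥ Sig *ᵥ v) :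
    ∃ G, G.PosSemidef ∧ IsSymplectic G ∧ ∀ v, d * (v ⬝ᵥ G *ᵥ v) ≤ v ⬝ᵥ Sig *ᵥ v := by
  set R := CFC.sqrt Sig
  have hR : R.PosSemidef := (CFC.sqrt_nonneg Sig).posSemidef
  have hR_symm : Rᵀ = R := hR.1.transpose_eq_self
  have hRR : Rᵀ * R = Sig := by
    rw [hR_symm]
    exact CFC.sqrt_mul_sqrt_self Sig hSig.posSemidef.nonneg
  have hR_det : IsUnit R.det := by
    have := (isUnit_iff_isUnit_det _).mp hSig.isUnit
    rw [← hRR, det_mul, det_transpose] at this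
    exact isUnit_of_mul_isUnit_left this
  have hSig_form (w) : w ⬝ᵥ Sig *ᵥ w = R *ᵥ w ⬝ᵥ R *ᵥ w := by
    rw [← hRR, mulVec_dotProduct_mulVec_self]
  have hA (a b : Fin n ⊕ Fin n → ℝ) :
      2 * d * (a ⬝ᵥ (R⁻¹ * J n * R⁻¹) *ᵥ b) ≤ a ⬝ᵥ a + b ⬝ᵥ b := by
    have hRinv (w : Fin n ⊕ Fin n → ℝ) : R *ᵥ R⁻¹ *ᵥ w = w := by
      rw [mulVec_mulVec, mul_nonsing_inv _ hR_det, one_mulVec]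
    rw [Matrix.mul_assoc, dotProduct_mul_mulVec, transpose_nonsing_inv, hR_symm, ← mulVec_mulVec]
    simpa only [hSig_form, hRinv] using hq (R⁻¹ *ᵥ a) (R⁻¹ *ᵥ b)
  refine ⟨R * CFC.abs (R⁻¹ * J n * R⁻¹) * R, ?_, isSymplectic_mul_cfcAbs_mul hR_symm hR_det,
    fun v => ?_⟩
  · simpa [hR_symm] using (CFC.abs_nonneg (R⁻¹ * J n * R⁻¹)).posSemidef.conjTranspose_mul_mul_same R
  · rw [hSig_form, Matrix.mul_assoc, dotProduct_mul_mulVec, hR_symm, ← mulVec_mulVec]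
    exact mul_dotProduct_cfcAbs_mulVec_le hA (R *ᵥ v)

end Symplectic

theorem image_ballh_subset_iff {n : ℕ} {ℏ : ℝ} (hℏ : 0 < ℏ)
    (S M : Matrix (Fin n ⊕ Fin n) (Fin n ⊕ Fin n) ℝ) :
    (fun z => S *ᵥ z) '' ballh n ℏ ⊆ {z | M *ᵥ z ⬝ᵥ z ≤ 2} ↔
      ∀ z, ℏ / 2 * (z ⬝ᵥ (Sᵀ * M * S) *ᵥ z) ≤ z ⬝ᵥ z := by
  rw [← forall_dotProduct_mulVec_le_of_dotProduct_self_le_iff hℏ two_pos, image_subset_iff]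
  refine forall_congr' fun z => imp_congr_right fun _ => ?_
  rw [mem_preimage, mem_ofPred_eq, Matrix.mul_assoc, dotProduct_mul_mulVec, transpose_transpose,
    ← mulVec_mulVec, dotProduct_comm]

/-- for a real symmetric positive definite `2n×2n` matrix `Σ`, the
complex matrix `Σ + (iℏ/2)J` is positive semidefinite if and only if the covariance
ellipsoid `Ω = {z : Σ⁻¹z·z ≤ 2}` contains a quantum blob `S(B²ⁿ(√ℏ))`, `S ∈ Sp(n)`. -/
theorem quantum_condition_iff_contains_quantum_blob
    {n : ℕ} (ℏ : ℝ) (hℏ : 0 < ℏ)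
    (Sig : Matrix (Fin n ⊕ Fin n) (Fin n ⊕ Fin n) ℝ) (hSig : Sig.PosDef)
    (Ω : Set (Fin n ⊕ Fin n → ℝ)) (hΩ : Ω = {z | Sig⁻¹.mulVec z ⬝ᵥ z ≤ 2}) :
    (Sig.map (Complex.ofReal ·) + (Complex.I * (ℏ / 2 : ℝ)) •
        (J n).map (Complex.ofReal ·)).PosSemidef
      ↔ ∃ S : Matrix (Fin n ⊕ Fin n) (Fin n ⊕ Fin n) ℝ,
          IsSymplectic S ∧ (fun z => S.mulVec z) '' ballh n ℏ ⊆ Ω := by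
  rw [posSemidef_map_ofReal_add_I_mul_smul_iff hSig.1 (J.transpose_eq_neg n), hΩ]
  simp_rw [image_ballh_subset_iff hℏ,
    hSig.forall_dotProduct_transpose_mul_inv_mul_le_iff _ (half_pos hℏ).le]
  constructor
  · intro hq
    obtain ⟨G, hG, hG_symp, hG_le⟩ := exists_posSemidef_isSymplectic_le hSig hq
    refine ⟨CFC.sqrt G, hG_symp.sqrt hG, ?_⟩
    rwa [(CFC.sqrt_nonneg G).posSemidef.1.transpose_eq_self,
      CFC.sqrt_mul_sqrt_self G hG.nonneg]
  · rintro ⟨S, hS, hS_le⟩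
    exact hS.two_mul_mul_dotProduct_J_mulVec_le (half_pos hℏ).le hS_le
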